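/- arXiv:2003.06410 — 2 statements merged into one kernel-verified Lean document; each statement's English description precedes it below -/
import Mathlib

section
/- Let z_0, ..., z_d be pairwise distinct complex numbers, let W_0, ..., W_d be invertible complex m×m matrices, and let F_0, ..., F_d be complex m×n matrices. Define the generalized matrix-valued barycentric function R(z) = (∑_{k=0}^d W_k/(z − z_k))^{-1} · (∑_{k=0}^d W_k F_k/(z − z_k)) at every z outside the support points at which the matrix ∑_{k=0}^d W_k/(z − z_k) is invertible. Then for every index j, R(z) tends to F_j (entrywise, equivalently in Frobenius norm) as z tends to z_j within a punctured neighborhood of z_j. That is, the generalized barycentric form (bary-B) with nonsingular matrix-valued weights interpolates the matrices F_j at all support points z_j. -/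
open Filter Topology

/-
Multiplying numerator and denominator of the barycentric form by `x - z j` does not change the
quotient. After this rescaling the denominator tends to `W j` and the numerator to `W j * F j`,
since `(x - z j) / (x - z k)` tends to `1` for `k = j` and to `0` for `k ≠ j`. Matrix inversion
is continuous at the invertible matrix `W j`, so the quotient tends to `(W j)⁻¹ * (W j * F j) = F j`.
-/

namespace Matrix

variable {ι κ K : Type*} [Fintype ι] [DecidableEq ι]

theorem inv_smul_of_ne_zero [Field K] {c : K} (hc : c ≠ 0) (A : Matrix ι ι K) :
    (c • A)⁻¹ = c⁻¹ • A⁻¹ := by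
  by_cases hA : IsUnit A.det
  · simpa [Units.smul_def] using inv_smul' A (Units.mk0 c hc) hA
  · have hcA : ¬ IsUnit (c • A).det := by
      simpa [det_smul, hc] using hA
    rw [nonsing_inv_apply_not_isUnit _ hA, nonsing_inv_apply_not_isUnit _ hcA, smul_zero]

theorem inv_smul_mul_smul [Field K] {c : K} (hc : c ≠ 0) (A : Matrix ι ι K) (B : Matrix ι κ K) :
    (c • A)⁻¹ * (c • B) = A⁻¹ * B := by
  rw [inv_smul_of_ne_zero hc, smul_mul, Matrix.mul_smul, smul_smul, inv_mul_cancel₀ hc, one_smul]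

theorem continuousAt_inv_of_isUnit [NormedField K] {A : Matrix ι ι K} (hA : IsUnit A) :
    ContinuousAt Inv.inv A := by
  refine continuousAt_matrix_inv A ?_
  rw [Ring.inverse_eq_inv']
  exact continuousAt_inv₀ ((isUnit_iff_isUnit_det A).mp hA).ne_zero

end Matrix

section Residue

variable {ι 𝕜 M : Type*} [Fintype ι] [NormedField 𝕜] [AddCommGroup M] [Module 𝕜 M]
  [TopologicalSpace M] [ContinuousAdd M] [ContinuousSMul 𝕜 M]

theorem tendsto_sub_mul_inv_sub_nhdsNE {a b : 𝕜} (hab : a ≠ b) :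
    Tendsto (fun x => (x - a) * (x - b)⁻¹) (𝓝[≠] a) (𝓝 0) := by
  have hcont : ContinuousAt (fun x => (x - a) * (x - b)⁻¹) a :=
    (continuousAt_id.sub continuousAt_const).mul
      ((continuousAt_id.sub continuousAt_const).inv₀ (sub_ne_zero.mpr hab))
  simpa using hcont.tendsto.mono_left nhdsWithin_le_nhds

theorem sub_mul_inv_sub_self_eventuallyEq_one (a : 𝕜) :
    (fun x => (x - a) * (x - a)⁻¹) =ᶠ[𝓝[≠] a] fun _ => 1 := by
  filter_upwards [self_mem_nhdsWithin] with x hx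
  exact mul_inv_cancel₀ (sub_ne_zero.mpr hx)

theorem tendsto_sub_smul_sum_inv_sub_smul {z : ι → 𝕜} (hz : Function.Injective z)
    (v : ι → M) (j : ι) :
    Tendsto (fun x => (x - z j) • ∑ k, (x - z k)⁻¹ • v k) (𝓝[≠] z j) (𝓝 (v j)) := by
  classical
  have hcoef : ∀ k, Tendsto (fun x => (x - z j) * (x - z k)⁻¹) (𝓝[≠] z j)
      (𝓝 (if k = j then 1 else 0)) := by
    intro k
    split_ifs with hk
    · subst hk
      exact tendsto_const_nhds.congr' (sub_mul_inv_sub_self_eventuallyEq_one (z k)).symm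
    · exact tendsto_sub_mul_inv_sub_nhdsNE (hz.ne (Ne.symm hk))
  have hsum := tendsto_finsetSum Finset.univ fun k _ => (hcoef k).smul_const (v k)
  simpa [Finset.smul_sum, smul_smul, ite_smul] using hsum

end Residue

/-- The generalized matrix-valued barycentric form (bary-B) with nonsingular matrix
weights and pairwise distinct support points interpolates the matrices `F j` at all
support points: `R(x) = (∑ₖ (x − zₖ)⁻¹ • Wₖ)⁻¹ * (∑ₖ (x − zₖ)⁻¹ • (Wₖ * Fₖ))` tends to
`F j` (entrywise, i.e. in the topology of the matrix space) as `x → z j` within a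
punctured neighborhood of `z j`. -/
theorem baryB_interpolates
    (d m n : ℕ) (z : Fin (d + 1) → ℂ)
    (W : Fin (d + 1) → Matrix (Fin m) (Fin m) ℂ)
    (F : Fin (d + 1) → Matrix (Fin m) (Fin n) ℂ)
    (hz : Function.Injective z) (hW : ∀ k, IsUnit (W k)) (j : Fin (d + 1)) :
    Tendsto (fun x : ℂ =>
        (∑ k, (x - z k)⁻¹ • W k)⁻¹ * ∑ k, (x - z k)⁻¹ • (W k * F k))
      (𝓝[≠] (z j)) (𝓝 (F j)) := by
  have hden := tendsto_sub_smul_sum_inv_sub_smul hz W j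
  have hnum := tendsto_sub_smul_sum_inv_sub_smul hz (fun k => W k * F k) j
  have hlim := ((continuous_fst.matrix_mul continuous_snd).tendsto _).comp
    (((Matrix.continuousAt_inv_of_isUnit (hW j)).tendsto.comp hden).prodMk_nhds hnum)
  rw [Matrix.nonsing_inv_mul_cancel_left _ _ ((Matrix.isUnit_iff_isUnit_det _).mp (hW j))]
    at hlim
  refine hlim.congr' ?_
  filter_upwards [self_mem_nhdsWithin] with x hx
  exact Matrix.inv_smul_mul_smul (sub_ne_zero.mpr hx) _ _
end

section
/- Let z_0, ..., z_d be pairwise distinct complex numbers and let W_0, ..., W_d be complex m×m matrices. Define the matrix polynomial P(z) = ∑_{k=0}^d W_k ∏_{j≠k} (z − z_j), each of whose entries is a polynomial of degree at most d. Then: (i) for every complex number z that is not a support point, ∑_{k=0}^d W_k/(z − z_k) = P(z) / ∏_{j=0}^d (z − z_j); (ii) det P(z) is a polynomial of degree at most dm; and (iii) if det P is not identically zero, then the set of points z that are not support points at which the matrix ∑_{k=0}^d W_k/(z − z_k) fails to be invertible is finite with at most dm elements. Hence a generalized barycentric (bary-B) approximant of order d with m×m weight matrices has at most dm poles, i.e.,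 its McMillan degree can be as high as dm but no higher. -/
/-!
Multiplying the barycentric denominator by the nodal polynomial `∏ⱼ (x - zⱼ)`, which vanishes
only at support points, turns it into the matrix polynomial `P`, whose entries have degree at
most `d`. Away from the support points, singularity of the denominator therefore means
`det P (x) = 0`, and by the Leibniz expansion `det P` has degree at most `d * m`.
-/

open Polynomial Finset

namespace Matrix

variable {m n R : Type*} [CommRing R]

theorem natDegree_det_le_of_natDegree_le [Fintype n] [DecidableEq n] {M : Matrix n n R[X]}
    {d : ℕ} (h : ∀ i j, (M i j).natDegree ≤ d) : M.det.natDegree ≤ d * Fintype.card n := by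
  rw [det_apply']
  refine natDegree_sum_le_of_forall_le _ _ fun σ _ => ?_
  calc ((Equiv.Perm.sign σ : ℤ) * ∏ i, M (σ i) i : R[X]).natDegree
      ≤ (∏ i, M (σ i) i).natDegree := by
        simpa only [natDegree_intCast, zero_add] using
          natDegree_mul_le (p := ((Equiv.Perm.sign σ : ℤ) : R[X]))
    _ ≤ ∑ i, (M (σ i) i).natDegree := natDegree_prod_le _ _
    _ ≤ Fintype.card n • d := sum_le_card_nsmul _ _ _ fun i _ => h _ _
    _ = d * Fintype.card n := by rw [smul_eq_mul, mul_comm]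

theorem natDegree_sum_smul_map_C_apply_le {ι : Type*} (s : Finset ι) (p : ι → R[X])
    (M : ι → Matrix m n R) {d : ℕ} (hp : ∀ k ∈ s, (p k).natDegree ≤ d) (i : m) (j : n) :
    ((∑ k ∈ s, p k • (M k).map C) i j).natDegree ≤ d := by
  rw [sum_apply]
  exact natDegree_sum_le_of_forall_le _ _ fun k hk => (natDegree_mul_C_le _ _).trans (hp k hk)

theorem map_eval_sum_smul_map_C {ι : Type*} (s : Finset ι) (p : ι → R[X])
    (M : ι → Matrix m n R) (x : R) :
    (∑ k ∈ s, p k • (M k).map C).map (eval x) = ∑ k ∈ s, (p k).eval x • M k := by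
  ext i j
  simp [sum_apply, eval_finsetSum]

theorem det_map_eval [Fintype n] [DecidableEq n] (M : Matrix n n R[X]) (x : R) :
    (M.map (eval x)).det = M.det.eval x :=
  ((evalRingHom x).map_det M).symm

theorem isRoot_det_of_not_isUnit_smul_map_eval {K : Type*} [Field K] [Fintype n] [DecidableEq n]
    {M : Matrix n n K[X]} {c x : K} (hc : c ≠ 0) (h : ¬IsUnit (c • M.map (eval x))) :
    M.det.IsRoot x := by
  rw [isUnit_iff_isUnit_det, det_smul, det_map_eval, isUnit_iff_ne_zero, not_not] at h
  exact (mul_eq_zero.mp h).resolve_left (pow_ne_zero _ hc)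

end Matrix

theorem inv_sub_eq_inv_prod_mul_prod_erase {ι K : Type*} [DecidableEq ι] [Field K]
    {s : Finset ι} {v : ι → K} {x : K} (hx : ∀ j ∈ s, x ≠ v j) {k : ι} (hk : k ∈ s) :
    (x - v k)⁻¹ = (∏ j ∈ s, (x - v j))⁻¹ * ∏ j ∈ s.erase k, (x - v j) := by
  have herase : ∏ j ∈ s.erase k, (x - v j) ≠ 0 :=
    prod_ne_zero_iff.mpr fun j hj => sub_ne_zero.mpr (hx j (mem_of_mem_erase hj))
  rw [← mul_prod_erase s _ hk, mul_inv, mul_assoc, inv_mul_cancel₀ herase, mul_one]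

theorem Polynomial.ncard_le_natDegree_of_forall_isRoot {R : Type*} [CommRing R] [IsDomain R]
    {q : R[X]} (hq : q ≠ 0) {S : Set R} (hS : ∀ x ∈ S, q.IsRoot x) :
    S.ncard ≤ q.natDegree := by
  classical
  have hsub : S ⊆ q.roots.toFinset := fun x hx => by simpa [hq] using hS x hx
  calc S.ncard ≤ (q.roots.toFinset : Set R).ncard :=
        Set.ncard_le_ncard hsub (Finset.finite_toSet _)
    _ ≤ q.roots.card := by rw [Set.ncard_coe_finset]; exact Multiset.toFinset_card_le _
    _ ≤ q.natDegree := card_roots' q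

theorem baryB_at_most_dm_poles_general
    (d m : ℕ) (z : Fin (d + 1) → ℂ)
    (W : Fin (d + 1) → Matrix (Fin m) (Fin m) ℂ)
    (P : Matrix (Fin m) (Fin m) ℂ[X])
    (hP : P = ∑ k, (∏ j ∈ univ.erase k, (X - C (z j))) • (W k).map C) :
    (∀ a b, (P a b).degree ≤ d) ∧
    (∀ x : ℂ, (∀ k, x ≠ z k) →
      (∑ k, (x - z k)⁻¹ • W k) = (∏ j, (x - z j))⁻¹ • P.map (eval x)) ∧
    P.det.degree ≤ (d * m : ℕ) ∧
    (P.det ≠ 0 →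
      {x : ℂ | (∀ k, x ≠ z k) ∧ ¬ IsUnit (∑ k, (x - z k)⁻¹ • W k)}.Finite ∧
      {x : ℂ | (∀ k, x ≠ z k) ∧ ¬ IsUnit (∑ k, (x - z k)⁻¹ • W k)}.ncard ≤ d * m) := by
  have hentry : ∀ a b, (P a b).natDegree ≤ d :=
    hP ▸ Matrix.natDegree_sum_smul_map_C_apply_le _ _ _ fun k _ =>
      (Lagrange.natDegree_nodal (s := univ.erase k) (v := z)).trans_le (by simp)
  have hdet : P.det.natDegree ≤ d * m := by
    simpa using Matrix.natDegree_det_le_of_natDegree_le hentry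
  have hbary : ∀ x : ℂ, (∀ k, x ≠ z k) →
      (∑ k, (x - z k)⁻¹ • W k) = (∏ j, (x - z j))⁻¹ • P.map (eval x) := fun x hx => by
    simp only [hP, Matrix.map_eval_sum_smul_map_C, eval_prod, eval_sub, eval_X, eval_C,
      smul_sum, smul_smul, ← inv_sub_eq_inv_prod_mul_prod_erase (fun j _ => hx j) (mem_univ _)]
  have hpole : ∀ x ∈ {x : ℂ | (∀ k, x ≠ z k) ∧ ¬IsUnit (∑ k, (x - z k)⁻¹ • W k)},
      P.det.IsRoot x := by
    rintro x ⟨hx, hsingular⟩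
    rw [hbary x hx] at hsingular
    exact Matrix.isRoot_det_of_not_isUnit_smul_map_eval
      (inv_ne_zero (prod_ne_zero_iff.mpr fun j _ => sub_ne_zero.mpr (hx j))) hsingular
  refine ⟨fun a b => degree_le_of_natDegree_le (hentry a b), hbary,
    degree_le_of_natDegree_le hdet, fun hP0 => ⟨?_, ?_⟩⟩
  · exact (finite_setOfPred_isRoot hP0).subset hpole
  · exact (ncard_le_natDegree_of_forall_isRoot hP0 hpole).trans hdet

/-- A generalized barycentric (bary-B) denominator of order `d` with `m×m` weight
matrices has at most `d·m` points of non-invertibility: with the matrix polynomial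
`P(z) = ∑ₖ Wₖ ∏_{j≠k} (z − zⱼ)` (entrywise degree at most `d`), one has
(i) `∑ₖ Wₖ/(z − zₖ) = P(z)/∏ⱼ(z − zⱼ)` away from the support points,
(ii) `det P` has degree at most `d·m`, and
(iii) if `det P` is not identically zero then the set of non-support points at which
`∑ₖ Wₖ/(z − zₖ)` fails to be invertible is finite with at most `d·m` elements. -/
theorem baryB_at_most_dm_poles
    (d m : ℕ) (z : Fin (d + 1) → ℂ) (hz : Function.Injective z)
    (W : Fin (d + 1) → Matrix (Fin m) (Fin m) ℂ)
    (P : Matrix (Fin m) (Fin m) ℂ[X])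
    (hP : P = ∑ k, (∏ j ∈ univ.erase k, (X - C (z j))) • (W k).map C) :
    (∀ a b, (P a b).degree ≤ d) ∧
    (∀ x : ℂ, (∀ k, x ≠ z k) →
      (∑ k, (x - z k)⁻¹ • W k) = (∏ j, (x - z j))⁻¹ • P.map (eval x)) ∧
    P.det.degree ≤ (d * m : ℕ) ∧
    (P.det ≠ 0 →
      {x : ℂ | (∀ k, x ≠ z k) ∧ ¬ IsUnit (∑ k, (x - z k)⁻¹ • W k)}.Finite ∧
      {x : ℂ | (∀ k, x ≠ z k) ∧ ¬ IsUnit (∑ k, (x - z k)⁻¹ • W k)}.ncard ≤ d * m) :=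
  baryB_at_most_dm_poles_general d m z W P hP
end
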